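/- Counting identity for word extensions: let A, B be words of length ℓ with Cor(A,A) = Cor(B,B). For every i ≥ 0, the number of words of length i + ℓ of the form X·A (X arbitrary of length i) whose pattern with respect to (A,B) consists of exactly the single overlap A placed at the end, equals the number of words of length ℓ + i of the form B·X whose pattern consists of exactly the single overlap B placed at the beginning. In the notation of the paper: L^{(A)}(i,0) = L^{(B)}(0,i). -/

import Mathlib

/-- Number of (possibly overlapping) occurrences of `A` as a contiguous
substring of `X`, counted via start positions. -/
def countOcc (A X : List Bool) : ℕ :=
  ((Finset.range (X.length + 1)).filter
    (fun i => i + A.length ≤ X.length ∧ (X.drop i).take A.length = A)).card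

/-- Correlation set `Cor(A,B)`: those `1 ≤ k ≤ ℓ-1` such that the length-`k`
suffix of `A` equals the length-`k` prefix of `B`. -/
def corSet (A B : List Bool) : Finset ℕ :=
  (Finset.Icc 1 (A.length - 1)).filter (fun k => A.drop (A.length - k) = B.take k)

/-- Correlation number `[A,B] = Σ_{k ∈ Cor(A,B)} 2^k`. -/
def corNum (A B : List Bool) : ℕ := ∑ k ∈ corSet A B, 2 ^ k

/-- The swap: `bar A B A = B`, `bar A B B = A` (when `C ∈ {A,B}`). -/
def bar (A B C : List Bool) : List Bool := if C = A then B else A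

/-- The word `C₁ ^{m₁} C₂ ^{m₂} ⋯ ^{m_{k-1}} C_k`. -/
def chainWord : List (List Bool) → List ℕ → List Bool
  | [], _ => []
  | [C], _ => C
  | C :: C' :: Cs, m :: ms => C ++ (chainWord (C' :: Cs) ms).drop m
  | C :: _ :: _, [] => C

/-- Validity of the chain data: each `mᵢ ∈ Cor(Cᵢ, Cᵢ₊₁)`. -/
def chainValid (Cs : List (List Bool)) (ms : List ℕ) : Prop :=
  ∀ i, i < ms.length → ms.getD i 0 ∈ corSet (Cs.getD i []) (Cs.getD (i + 1) [])

/-- `Y` is an overlap of `A` and `B`, i.e. `Y = C₁ ^{m₁} ⋯ ^{m_{k-1}} C_k`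
with all `Cᵢ ∈ {A,B}` and `mᵢ ∈ Cor(Cᵢ,Cᵢ₊₁)`. -/
def isOverlap (A B Y : List Bool) : Prop :=
  ∃ Cs ms, Cs ≠ [] ∧ Cs.length = ms.length + 1 ∧ (∀ C ∈ Cs, C = A ∨ C = B) ∧
    chainValid Cs ms ∧ Y = chainWord Cs ms

/-- `Y'` is obtained from the overlap `Y = C₁ ^{m₁} ⋯ ^{m_{k-1}} C_k` by the
swap map: `Y' = C̄_k ^{m_{k-1}} ⋯ ^{m₁} C̄₁` (for some decomposition of `Y`). -/
def overlapFlip (A B Y Y' : List Bool) : Prop :=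
  ∃ Cs ms, Cs ≠ [] ∧ Cs.length = ms.length + 1 ∧ (∀ C ∈ Cs, C = A ∨ C = B) ∧
    chainValid Cs ms ∧ Y = chainWord Cs ms ∧
    Y' = chainWord ((Cs.map (bar A B)).reverse) ms.reverse

/-- `interleave [X₀,…,X_k] [E₁,…,E_k] = X₀ E₁ X₁ ⋯ E_k X_k`. -/
def interleave : List (List Bool) → List (List Bool) → List Bool
  | [], _ => []
  | X :: _, [] => X
  | X :: Xs, E :: Es => X ++ E ++ interleave Xs Es

/-- `Y = X₀ E₁ X₁ ⋯ E_k X_k` is a decomposition of `Y` with respect to `(A,B)`: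
the `Eᵢ` are overlaps of `A` and `B` capturing all occurrences of `A` and `B`
in `Y`, and the gaps `Xᵢ` contain no occurrence of `A` or `B`. -/
def isDecomp (A B Y : List Bool) (Xs Es : List (List Bool)) : Prop :=
  Xs.length = Es.length + 1 ∧ Y = interleave Xs Es ∧
  (∀ E ∈ Es, isOverlap A B E) ∧
  (∀ X ∈ Xs, countOcc A X = 0 ∧ countOcc B X = 0) ∧
  countOcc A Y = (Es.map (countOcc A)).sum ∧
  countOcc B Y = (Es.map (countOcc B)).sum

/-- `L^M(I)`: the number of words `Y` with pattern `M = (E₁,…,E_k)` and gap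
lengths `I = (i₀,…,i_k)`. -/
noncomputable def patCount (A B : List Bool) (M : List (List Bool)) (I : List ℕ) : ℕ :=
  {Y : List Bool | ∃ Xs, isDecomp A B Y Xs M ∧ Xs.map List.length = I}.ncard

/-- `M'` is the image of the pattern `M = (E₁,…,E_k)` under
`φ(E₁,…,E_k) = (φ(E_k),…,φ(E₁))`. -/
def patternFlip (A B : List Bool) (M M' : List (List Bool)) : Prop :=
  M'.length = M.length ∧
  ∀ j, j < M.length → overlapFlip A B (M.reverse.getD j []) (M'.getD j [])

namespace SPC
open Finset List

def occAt (A Y : List Bool) (q : ℕ) : Prop :=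
  q + A.length ≤ Y.length ∧ (Y.drop q).take A.length = A

instance (A Y : List Bool) (q : ℕ) : Decidable (occAt A Y q) := by
  unfold occAt; infer_instance

lemma countOcc_eq (A Y : List Bool) :
    countOcc A Y = ((Finset.range (Y.length+1)).filter (fun q => occAt A Y q)).card := rfl

lemma countOcc_eq_zero_iff (A Y : List Bool) :
    countOcc A Y = 0 ↔ ∀ q, ¬ occAt A Y q := by
  rw [countOcc_eq, Finset.card_eq_zero, Finset.filter_eq_empty_iff]
  constructor
  · intro h q hq
    exact h (Finset.mem_range.2 (by have := hq.1; omega)) hq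
  · intro h q _ hq
    exact h q hq

lemma take_factor (Y : List Bool) (q m ℓ : ℕ) (h : q + ℓ ≤ m) :
    ((Y.take m).drop q).take ℓ = (Y.drop q).take ℓ := by
  rw [List.drop_take, List.take_take]
  congr 1
  omega

lemma occAt_take_iff (A Y : List Bool) (m q : ℕ) (h : m ≤ Y.length) :
    occAt A (Y.take m) q ↔ q + A.length ≤ m ∧ occAt A Y q := by
  unfold occAt
  rw [List.length_take]
  constructor
  · rintro ⟨h1, h2⟩
    have hq : q + A.length ≤ m := by omega
    exact ⟨hq, by omega, by rw [← take_factor Y q m A.length hq]; exact h2⟩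
  · rintro ⟨hq, _, h2⟩
    exact ⟨by omega, by rw [take_factor Y q m A.length hq]; exact h2⟩

lemma occAt_append_left_iff (A Z W : List Bool) (q : ℕ) (h : q + A.length ≤ Z.length) :
    occAt A (Z ++ W) q ↔ occAt A Z q := by
  unfold occAt
  rw [List.length_append, List.drop_append_of_le_length (by omega),
    List.take_append_of_le_length (by rw [List.length_drop]; omega)]
  constructor
  · rintro ⟨_, h2⟩; exact ⟨h, h2⟩
  · rintro ⟨_, h2⟩; exact ⟨by omega, h2⟩

lemma occAt_mid (A X C R : List Bool) (p : ℕ) (hX : X.length = p) :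
    ((X ++ C ++ R).drop p).take C.length = C := by
  rw [List.append_assoc, List.drop_left' hX, List.take_left' rfl]

lemma countOcc_len_eq (A C : List Bool) (hC : C.length = A.length) (hl : 1 ≤ A.length) :
    countOcc A C = if C = A then 1 else 0 := by
  rw [countOcc_eq]
  have hocc : ∀ q, occAt A C q ↔ (q = 0 ∧ C = A) := by
    intro q
    unfold occAt
    constructor
    · rintro ⟨h1, h2⟩
      have hq : q = 0 := by omega
      subst hq
      rw [List.drop_zero, ← hC, List.take_length] at h2
      exact ⟨rfl, h2⟩
    · rintro ⟨hq, hCA⟩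
      subst hq hCA
      exact ⟨by omega, by rw [List.drop_zero, List.take_length]⟩
  split
  · next h =>
    rw [show ((Finset.range (C.length+1)).filter (fun q => occAt A C q)) = {0} by
      ext q
      simp only [Finset.mem_filter, Finset.mem_range, Finset.mem_singleton, hocc]
      constructor
      · rintro ⟨_, h2, _⟩; exact h2
      · rintro rfl; exact ⟨by omega, rfl, h⟩]
    rfl
  · next h =>
    rw [Finset.card_eq_zero, Finset.filter_eq_empty_iff]
    intro q _ hq
    exact h ((hocc q).1 hq).2

lemma onlyEnd_iff_one (A C X : List Bool) (p : ℕ) (hC : C.length = A.length)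
    (hl : 1 ≤ A.length) (hX : X.length = p) :
    countOcc A (X ++ C) = countOcc A C ↔ ∀ q, occAt A (X ++ C) q → q = p := by
  rw [countOcc_len_eq A C hC hl, countOcc_eq]
  have hlen : (X ++ C).length = p + C.length := by rw [List.length_append, hX]
  have hmem : ∀ q, occAt A (X ++ C) q → q ∈ (Finset.range ((X++C).length+1)).filter
      (fun q => occAt A (X++C) q) := by
    intro q hq
    exact Finset.mem_filter.2 ⟨Finset.mem_range.2 (by have := hq.1; omega), hq⟩
  have hp_iff : occAt A (X ++ C) p ↔ C = A := by
    unfold occAt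
    rw [List.drop_left' hX, ← hC, List.take_length]
    constructor
    · exact fun h => h.2
    · rintro rfl
      refine ⟨?_, rfl⟩
      have h3 : (X ++ C).length = X.length + C.length := List.length_append
      omega
  split
  · next h =>
    have hpmem := hmem p (hp_iff.2 h)
    constructor
    · intro h1 q hq
      obtain ⟨a, ha⟩ := Finset.card_eq_one.1 h1
      have h2 := hmem q hq
      rw [ha] at h2 hpmem
      simp only [Finset.mem_singleton] at h2 hpmem
      omega
    · intro h1
      rw [show ((Finset.range ((X++C).length+1)).filter (fun q => occAt A (X++C) q)) = {p} by
        ext q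
        simp only [Finset.mem_filter, Finset.mem_range, Finset.mem_singleton]
        constructor
        · rintro ⟨_, h2⟩; exact h1 q h2
        · rintro rfl; exact ⟨by omega, hp_iff.2 h⟩]
      rfl
  · next h =>
    constructor
    · intro h1 q hq
      exfalso
      rw [Finset.card_eq_zero, Finset.filter_eq_empty_iff] at h1
      exact h1 (Finset.mem_range.2 (by have := hq.1; omega)) hq
    · intro h1
      rw [Finset.card_eq_zero, Finset.filter_eq_empty_iff]
      intro q _ hq
      exact h (hp_iff.1 (h1 q hq ▸ hq))

end SPC

namespace SPC2
open Finset List SPC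

def allBL : ℕ → Finset (List Bool)
  | 0 => {[]}
  | n+1 => (allBL n).biUnion fun l => {true :: l, false :: l}

lemma mem_allBL (n : ℕ) (X : List Bool) : X ∈ allBL n ↔ X.length = n := by
  induction n generalizing X with
  | zero =>
    cases X <;> simp [allBL]
  | succ n ih =>
    cases X with
    | nil => simp [allBL]
    | cons b t =>
      simp only [allBL, Finset.mem_biUnion, Finset.mem_insert, Finset.mem_singleton,
        List.length_cons]
      constructor
      · rintro ⟨l, hl, h | h⟩ <;> (injection h with hb ht; subst ht; simp [(ih _).1 hl])
      · intro h
        refine ⟨t, (ih t).2 (by omega), ?_⟩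
        cases b <;> simp

def fCnt (A B C : List Bool) (p : ℕ) : ℕ :=
  ((allBL p).filter (fun X => countOcc A (X ++ C) = countOcc A C ∧
    countOcc B (X ++ C) = countOcc B C)).card

def gCnt (A B C : List Bool) (p : ℕ) : ℕ :=
  ((allBL p).filter (fun X => countOcc A (C ++ X) = countOcc A C ∧
    countOcc B (C ++ X) = countOcc B C)).card

def aCnt (A B : List Bool) (i : ℕ) : ℕ :=
  ((allBL i).filter (fun Z => countOcc A Z = 0 ∧ countOcc B Z = 0)).card

def TF (ℓ : ℕ) (A B W : List Bool) (i : ℕ) : Finset (ℕ × List Bool) :=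
  ((Finset.range (i+1)) ×ˢ ({A, B} : Finset (List Bool))).filter
    (fun pc => i < pc.1 + ℓ ∧ pc.2.drop (i - pc.1) = W.take (pc.1 + ℓ - i))

def TF' (ℓ : ℕ) (A B W : List Bool) (i : ℕ) : Finset (ℕ × List Bool) :=
  ((Finset.range (i+1)) ×ˢ ({A, B} : Finset (List Bool))).filter
    (fun pc => i < pc.1 + ℓ ∧ W.drop (i - pc.1) = pc.2.take (pc.1 + ℓ - i))

lemma occAt_reverse (A Y : List Bool) (q : ℕ) (h : occAt A Y q) :
    occAt A.reverse Y.reverse (Y.length - A.length - q) := by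
  obtain ⟨h1, h2⟩ := h
  refine ⟨by simp; omega, ?_⟩
  have e1 : A.reverse = ((Y.drop q).take A.length).reverse := by rw [h2]
  rw [List.length_reverse, e1, List.reverse_take, List.reverse_drop, List.length_drop,
    List.drop_take]
  congr 1
  · omega
  · congr 1
    omega

lemma occAt_reverse' (A Y : List Bool) (q : ℕ) (h : occAt A.reverse Y.reverse q) :
    occAt A Y (Y.length - A.length - q) := by
  have := occAt_reverse A.reverse Y.reverse q h
  simpa using this

lemma countOcc_reverse (A Y : List Bool) :
    countOcc A.reverse Y.reverse = countOcc A Y := by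
  rw [countOcc_eq, countOcc_eq]
  refine Finset.card_nbij' (i := fun q => Y.length - A.length - q)
    (j := fun q => Y.length - A.length - q) ?_ ?_ ?_ ?_
  · intro q hq
    simp only [Finset.mem_coe, Finset.mem_filter, Finset.mem_range, List.length_reverse] at hq ⊢
    have h := occAt_reverse' A Y q hq.2
    exact ⟨by have := h.1; omega, h⟩
  · intro q hq
    simp only [Finset.mem_coe, Finset.mem_filter, Finset.mem_range, List.length_reverse] at hq ⊢
    have h := occAt_reverse A Y q hq.2
    exact ⟨by have := h.1; omega, h⟩
  · intro q hq
    simp only [Finset.mem_coe, Finset.mem_filter, Finset.mem_range, List.length_reverse] at hq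
    have h := hq.2.1
    simp only [List.length_reverse] at h
    show Y.length - A.length - (Y.length - A.length - q) = q
    omega
  · intro q hq
    simp only [Finset.mem_coe, Finset.mem_filter, Finset.mem_range] at hq
    have h := hq.2.1
    show Y.length - A.length - (Y.length - A.length - q) = q
    omega

end SPC2

namespace SPC2
open Finset List SPC

noncomputable def keyFn (A B W : List Bool) (ℓ : ℕ) (Z : List Bool) : ℕ × List Bool :=
  (sInf {q | occAt A (Z ++ W) q ∨ occAt B (Z ++ W) q},
   ((Z ++ W).drop (sInf {q | occAt A (Z ++ W) q ∨ occAt B (Z ++ W) q})).take ℓ)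

lemma lemL (ℓ : ℕ) (A B W : List Bool) (hl : 1 ≤ ℓ) (hA : A.length = ℓ) (hB : B.length = ℓ)
    (hW : W = A ∨ W = B) (i : ℕ) :
    aCnt A B i = ∑ pc ∈ TF ℓ A B W i, fCnt A B pc.2 pc.1 := by
  classical
  have hWl : W.length = ℓ := by rcases hW with rfl | rfl <;> assumption
  -- basic facts about any avoiding Z of length i
  have Smem_i : ∀ Z : List Bool, Z.length = i →
      occAt A (Z ++ W) i ∨ occAt B (Z ++ W) i := by
    intro Z hZ
    rcases hW with rfl | rfl
    · exact Or.inl ⟨by simp [hZ], by rw [List.drop_left' hZ, List.take_length]⟩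
    · exact Or.inr ⟨by simp [hZ], by rw [List.drop_left' hZ, List.take_length]⟩
  have Savoid : ∀ Z : List Bool, Z.length = i → countOcc A Z = 0 → countOcc B Z = 0 →
      ∀ q, q + ℓ ≤ i → ¬ (occAt A (Z ++ W) q ∨ occAt B (Z ++ W) q) := by
    intro Z hZ ha hb q hq h
    rcases h with h | h
    · exact (countOcc_eq_zero_iff A Z).1 ha q
        ((occAt_append_left_iff A Z W q (by rw [hA, hZ]; omega)).1 h)
    · exact (countOcc_eq_zero_iff B Z).1 hb q
        ((occAt_append_left_iff B Z W q (by rw [hB, hZ]; omega)).1 h)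
  -- step A : key lands in TF
  have keyTF : ∀ Z ∈ (allBL i).filter (fun Z => countOcc A Z = 0 ∧ countOcc B Z = 0),
      keyFn A B W ℓ Z ∈ TF ℓ A B W i := by
    intro Z hZmem
    rw [Finset.mem_filter, mem_allBL] at hZmem
    obtain ⟨hZ, ha, hb⟩ := hZmem
    set S := {q | occAt A (Z ++ W) q ∨ occAt B (Z ++ W) q} with hS
    have hiS : i ∈ S := Smem_i Z hZ
    have hne : S.Nonempty := ⟨i, hiS⟩
    set p := sInf S with hp
    have hpS : p ∈ S := Nat.sInf_mem hne
    have hple : p ≤ i := Nat.sInf_le hiS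
    have hpgt : i < p + ℓ := by
      by_contra h
      exact Savoid Z hZ ha hb p (by omega) hpS
    have hYlen : (Z ++ W).length = i + ℓ := by rw [List.length_append, hZ, hWl]
    have hCval : ((Z ++ W).drop p).take ℓ = A ∨ ((Z ++ W).drop p).take ℓ = B := by
      rcases hpS with h | h
      · exact Or.inl (by rw [← hA]; exact h.2)
      · exact Or.inr (by rw [← hB]; exact h.2)
    rw [TF, Finset.mem_filter]
    have hkey1 : (keyFn A B W ℓ Z).1 = p := rfl
    have hkey2 : (keyFn A B W ℓ Z).2 = ((Z ++ W).drop p).take ℓ := rfl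
    refine ⟨Finset.mem_product.2 ⟨?_, ?_⟩, ?_, ?_⟩
    · rw [hkey1]; exact Finset.mem_range.2 (by omega)
    · rw [hkey2]; simp only [Finset.mem_insert, Finset.mem_singleton]; exact hCval
    · rw [hkey1]; omega
    · rw [hkey1, hkey2]
      rw [List.drop_take, List.drop_drop]
      rw [show p + (i - p) = i by omega, show ℓ - (i - p) = p + ℓ - i by omega,
        List.drop_left' hZ]
  -- the fiberwise decomposition
  rw [aCnt, Finset.card_eq_sum_card_fiberwise keyTF]
  refine Finset.sum_congr rfl ?_
  rintro ⟨p, C⟩ hpc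
  rw [TF, Finset.mem_filter, Finset.mem_product, Finset.mem_range] at hpc
  obtain ⟨⟨hpr, hCmem⟩, hpgt, hCW⟩ := hpc
  simp only [Finset.mem_insert, Finset.mem_singleton] at hCmem
  simp only at hpgt hCW
  have hple : p ≤ i := by omega
  have hCl : C.length = ℓ := by rcases hCmem with rfl | rfl <;> assumption
  rw [fCnt]
  refine Finset.card_nbij' (i := fun Z => Z.take p) (j := fun X => X ++ C.take (i - p))
    ?_ ?_ ?_ ?_
  -- forward
  · intro Z hZmem
    rw [Finset.mem_coe, Finset.mem_filter, Finset.mem_filter, mem_allBL] at hZmem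
    obtain ⟨⟨hZ, ha, hb⟩, hkey⟩ := hZmem
    have hYlen : (Z ++ W).length = i + ℓ := by rw [List.length_append, hZ, hWl]
    have hpinf : sInf {q | occAt A (Z ++ W) q ∨ occAt B (Z ++ W) q} = p := by
      have := congrArg Prod.fst hkey; simpa [keyFn] using this
    have hCdef : ((Z ++ W).drop p).take ℓ = C := by
      have := congrArg Prod.snd hkey; rw [keyFn] at this; simp only at this
      rw [hpinf] at this; exact this
    have htake : (Z ++ W).take (p + ℓ) = Z.take p ++ C := by
      rw [List.take_add, List.take_append_of_le_length (by omega), hCdef]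
    have honly : ∀ q, (occAt A (Z.take p ++ C) q ∨ occAt B (Z.take p ++ C) q) → q = p := by
      intro q hq
      rw [← htake] at hq
      have hq' : (occAt A (Z ++ W) q ∨ occAt B (Z ++ W) q) ∧ q + ℓ ≤ p + ℓ := by
        rcases hq with h | h
        · have := (occAt_take_iff A (Z ++ W) (p + ℓ) q (by omega)).1 h
          exact ⟨Or.inl this.2, by rw [hA] at this; omega⟩
        · have := (occAt_take_iff B (Z ++ W) (p + ℓ) q (by omega)).1 h
          exact ⟨Or.inr this.2, by rw [hB] at this; omega⟩
      have hmin : p ≤ q := hpinf ▸ Nat.sInf_le hq'.1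
      omega
    rw [Finset.mem_coe, Finset.mem_filter, mem_allBL]
    have hXlen : (Z.take p).length = p := by rw [List.length_take]; omega
    refine ⟨hXlen, ?_, ?_⟩
    · rw [onlyEnd_iff_one A C (Z.take p) p (by omega) (by omega) hXlen]
      exact fun q hq => honly q (Or.inl hq)
    · rw [onlyEnd_iff_one B C (Z.take p) p (by omega) (by omega) hXlen]
      exact fun q hq => honly q (Or.inr hq)
  -- backward
  · intro X hXmem
    rw [Finset.mem_coe, Finset.mem_filter, mem_allBL] at hXmem
    obtain ⟨hXlen, hoa, hob⟩ := hXmem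
    have honlyA := (onlyEnd_iff_one A C X p (by omega) (by omega) hXlen).1 hoa
    have honlyB := (onlyEnd_iff_one B C X p (by omega) (by omega) hXlen).1 hob
    have honly : ∀ q, (occAt A (X ++ C) q ∨ occAt B (X ++ C) q) → q = p := by
      rintro q (h | h)
      · exact honlyA q h
      · exact honlyB q h
    set Z := X ++ C.take (i - p) with hZdef
    have hZ : Z.length = i := by
      rw [hZdef, List.length_append, List.length_take, hXlen]; omega
    have hYeq : Z ++ W = (X ++ C) ++ W.drop (p + ℓ - i) := by
      rw [hZdef, List.append_assoc, List.append_assoc]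
      congr 1
      conv_rhs => rw [← List.take_append_drop (i - p) C, hCW]
      rw [List.append_assoc, List.take_append_drop]
    have hXC : (X ++ C).length = p + ℓ := by rw [List.length_append, hXlen, hCl]
    have hYlen : (Z ++ W).length = i + ℓ := by rw [List.length_append, hZ, hWl]
    have htake : (Z ++ W).take (p + ℓ) = X ++ C := by
      rw [hYeq, List.take_append_of_le_length (by omega), List.take_of_length_le (by omega)]
    have hdropP : ((Z ++ W).drop p).take ℓ = C := by
      rw [hYeq]
      have := occAt_mid A X C (W.drop (p + ℓ - i)) p hXlen
      rw [hCl] at this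
      exact this
    have hpS : occAt A (Z ++ W) p ∨ occAt B (Z ++ W) p := by
      rcases hCmem with rfl | rfl
      · exact Or.inl ⟨by omega, by rw [hA]; exact hdropP⟩
      · exact Or.inr ⟨by omega, by rw [hB]; exact hdropP⟩
    have hmin : ∀ q, (occAt A (Z ++ W) q ∨ occAt B (Z ++ W) q) → p ≤ q := by
      intro q hq
      by_contra hlt
      push_neg at hlt
      have hq' : q = p := by
        rcases hq with h | h
        · refine honly q (Or.inl ?_)
          rw [← htake]
          exact (occAt_take_iff A (Z ++ W) (p + ℓ) q (by omega)).2 ⟨by rw [hA]; omega, h⟩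
        · refine honly q (Or.inr ?_)
          rw [← htake]
          exact (occAt_take_iff B (Z ++ W) (p + ℓ) q (by omega)).2 ⟨by rw [hB]; omega, h⟩
      omega
    have hpinf : sInf {q | occAt A (Z ++ W) q ∨ occAt B (Z ++ W) q} = p := by
      have h1 : sInf {q | occAt A (Z ++ W) q ∨ occAt B (Z ++ W) q} ≤ p := Nat.sInf_le hpS
      have h2 := hmin _ (Nat.sInf_mem (⟨p, hpS⟩ :
        Set.Nonempty {q | occAt A (Z ++ W) q ∨ occAt B (Z ++ W) q}))
      omega
    rw [Finset.mem_coe, Finset.mem_filter, Finset.mem_filter, mem_allBL]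
    refine ⟨⟨hZ, ?_, ?_⟩, ?_⟩
    · rw [countOcc_eq_zero_iff]
      intro q hq
      have h1 : q + ℓ ≤ i := by have := hq.1; rw [hA, hZ] at this; omega
      have h2 := hmin q (Or.inl ((occAt_append_left_iff A Z W q (by rw [hA]; omega)).2 hq))
      omega
    · rw [countOcc_eq_zero_iff]
      intro q hq
      have h1 : q + ℓ ≤ i := by have := hq.1; rw [hB, hZ] at this; omega
      have h2 := hmin q (Or.inr ((occAt_append_left_iff B Z W q (by rw [hB]; omega)).2 hq))
      omega
    · show keyFn A B W ℓ Z = (p, C)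
      rw [keyFn]
      simp only [hpinf, hdropP]
  -- left inverse
  · intro Z hZmem
    rw [Finset.mem_coe, Finset.mem_filter, Finset.mem_filter, mem_allBL] at hZmem
    obtain ⟨⟨hZ, ha, hb⟩, hkey⟩ := hZmem
    have hpinf : sInf {q | occAt A (Z ++ W) q ∨ occAt B (Z ++ W) q} = p := by
      have := congrArg Prod.fst hkey; simpa [keyFn] using this
    have hCdef : ((Z ++ W).drop p).take ℓ = C := by
      have := congrArg Prod.snd hkey; rw [keyFn] at this; simp only at this
      rw [hpinf] at this; exact this
    show Z.take p ++ C.take (i - p) = Z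
    have hZtake : Z = (Z ++ W).take i := by rw [List.take_left' hZ]
    conv_rhs => rw [hZtake]
    rw [show i = p + (i - p) by omega, List.take_add]
    congr 1
    · rw [List.take_append_of_le_length (by omega)]
    · rw [← hCdef, List.take_take]
      congr 1
      omega
  -- right inverse
  · intro X hXmem
    rw [Finset.mem_coe, Finset.mem_filter, mem_allBL] at hXmem
    show (X ++ C.take (i - p)).take p = X
    rw [List.take_append_of_le_length (by omega), List.take_of_length_le (by omega)]

end SPC2

namespace SPC2
open Finset List SPC

lemma gCnt_rev (A B C : List Bool) (p : ℕ) :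
    gCnt A B C p = fCnt A.reverse B.reverse C.reverse p := by
  rw [gCnt, fCnt]
  refine Finset.card_nbij' (i := fun X => X.reverse) (j := fun X => X.reverse) ?_ ?_ ?_ ?_
  · intro X hX
    rw [Finset.mem_coe, Finset.mem_filter, mem_allBL] at hX ⊢
    obtain ⟨h1, h2, h3⟩ := hX
    refine ⟨by simp [h1], ?_, ?_⟩
    · rw [show X.reverse ++ C.reverse = (C ++ X).reverse by rw [List.reverse_append],
        countOcc_reverse, countOcc_reverse]
      exact h2
    · rw [show X.reverse ++ C.reverse = (C ++ X).reverse by rw [List.reverse_append],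
        countOcc_reverse, countOcc_reverse]
      exact h3
  · intro X hX
    rw [Finset.mem_coe, Finset.mem_filter, mem_allBL] at hX ⊢
    obtain ⟨h1, h2, h3⟩ := hX
    refine ⟨by simp [h1], ?_, ?_⟩
    · rw [← countOcc_reverse A (C ++ X.reverse), ← countOcc_reverse A C,
        List.reverse_append, List.reverse_reverse]
      exact h2
    · rw [← countOcc_reverse B (C ++ X.reverse), ← countOcc_reverse B C,
        List.reverse_append, List.reverse_reverse]
      exact h3
  · intro X _; exact List.reverse_reverse X
  · intro X _; exact List.reverse_reverse X

lemma aCnt_rev (A B : List Bool) (i : ℕ) :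
    aCnt A B i = aCnt A.reverse B.reverse i := by
  rw [aCnt, aCnt]
  refine Finset.card_nbij' (i := fun X => X.reverse) (j := fun X => X.reverse) ?_ ?_ ?_ ?_
  · intro X hX
    rw [Finset.mem_coe, Finset.mem_filter, mem_allBL] at hX ⊢
    obtain ⟨h1, h2, h3⟩ := hX
    exact ⟨by simp [h1], by rw [countOcc_reverse]; exact h2, by rw [countOcc_reverse]; exact h3⟩
  · intro X hX
    rw [Finset.mem_coe, Finset.mem_filter, mem_allBL] at hX ⊢
    obtain ⟨h1, h2, h3⟩ := hX
    refine ⟨by simp [h1], ?_, ?_⟩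
    · rw [← countOcc_reverse A X.reverse, List.reverse_reverse]; exact h2
    · rw [← countOcc_reverse B X.reverse, List.reverse_reverse]; exact h3
  · intro X _; exact List.reverse_reverse X
  · intro X _; exact List.reverse_reverse X

lemma revCond (ℓ : ℕ) (U V : List Bool) (hU : U.length = ℓ) (hV : V.length = ℓ)
    (p i : ℕ) (hple : p ≤ i) (hpgt : i < p + ℓ)
    (h : U.drop (i - p) = V.take (p + ℓ - i)) :
    V.reverse.drop (i - p) = U.reverse.take (p + ℓ - i) := by
  have h2 := congrArg List.reverse h
  rw [List.reverse_drop, List.reverse_take, hU, hV] at h2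
  rw [show ℓ - (i - p) = p + ℓ - i by omega, show ℓ - (p + ℓ - i) = i - p by omega] at h2
  exact h2.symm

lemma lemR (ℓ : ℕ) (A B W : List Bool) (hl : 1 ≤ ℓ) (hA : A.length = ℓ) (hB : B.length = ℓ)
    (hW : W = A ∨ W = B) (i : ℕ) :
    aCnt A B i = ∑ pc ∈ TF' ℓ A B W i, gCnt A B pc.2 pc.1 := by
  have hWl : W.length = ℓ := by rcases hW with rfl | rfl <;> assumption
  rw [aCnt_rev, lemL ℓ A.reverse B.reverse W.reverse hl (by simp [hA]) (by simp [hB])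
    (by rcases hW with rfl | rfl; exacts [Or.inl rfl, Or.inr rfl]) i]
  refine (Finset.sum_nbij' (i := fun pc => (pc.1, pc.2.reverse))
    (j := fun pc => (pc.1, pc.2.reverse)) ?_ ?_ ?_ ?_ ?_).symm
  · -- TF' → TF reverse
    rintro ⟨p, C⟩ hpc
    rw [TF', Finset.mem_filter, Finset.mem_product, Finset.mem_range] at hpc
    obtain ⟨⟨h1, h2⟩, h3, h4⟩ := hpc
    simp only [Finset.mem_insert, Finset.mem_singleton] at h2
    simp only at h3 h4
    have hCl : C.length = ℓ := by rcases h2 with rfl | rfl <;> assumption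
    rw [TF, Finset.mem_filter, Finset.mem_product, Finset.mem_range]
    refine ⟨⟨h1, ?_⟩, h3, ?_⟩
    · simp only [Finset.mem_insert, Finset.mem_singleton]
      rcases h2 with rfl | rfl; exacts [Or.inl rfl, Or.inr rfl]
    · exact revCond ℓ W C hWl hCl p i (by omega) h3 h4
  · -- TF reverse → TF'
    rintro ⟨p, C⟩ hpc
    rw [TF, Finset.mem_filter, Finset.mem_product, Finset.mem_range] at hpc
    obtain ⟨⟨h1, h2⟩, h3, h4⟩ := hpc
    simp only [Finset.mem_insert, Finset.mem_singleton] at h2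
    simp only at h3 h4
    have hCl : C.length = ℓ := by
      rcases h2 with rfl | rfl <;> simp [hA, hB]
    rw [TF', Finset.mem_filter, Finset.mem_product, Finset.mem_range]
    refine ⟨⟨h1, ?_⟩, h3, ?_⟩
    · simp only [Finset.mem_insert, Finset.mem_singleton]
      rcases h2 with rfl | rfl
      · exact Or.inl (List.reverse_reverse A)
      · exact Or.inr (List.reverse_reverse B)
    · have := revCond ℓ C W.reverse hCl (by simp [hWl]) p i (by omega) h3 h4
      rwa [List.reverse_reverse] at this
  · rintro ⟨p, C⟩ _
    simp [List.reverse_reverse]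
  · rintro ⟨p, C⟩ _
    simp [List.reverse_reverse]
  · rintro ⟨p, C⟩ _
    simp only
    rw [gCnt_rev]

end SPC2

namespace SPC2
open Finset List SPC

lemma bar_A (A B : List Bool) : bar A B A = B := if_pos rfl

lemma bar_B (A B : List Bool) : bar A B B = A := by
  unfold bar
  split
  · next h => rw [h]
  · rfl

lemma bar_mem (A B C : List Bool) (h : C = A ∨ C = B) : bar A B C = A ∨ bar A B C = B := by
  rcases h with rfl | rfl
  · rw [bar_A]; exact Or.inr rfl
  · rw [bar_B]; exact Or.inl rfl

lemma bar_bar (A B C : List Bool) (h : C = A ∨ C = B) : bar A B (bar A B C) = C := by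
  rcases h with rfl | rfl
  · rw [bar_A, bar_B]
  · rw [bar_B, bar_A]

lemma cond_swap (ℓ : ℕ) (A B : List Bool) (hA : A.length = ℓ) (hB : B.length = ℓ)
    (hcor : corSet A A = corSet B B) (C C' : List Bool)
    (hC : C = A ∨ C = B) (hC' : C' = A ∨ C' = B)
    (p i : ℕ) (hlt : p < i) (hpgt : i < p + ℓ) :
    (C'.drop (i - p) = C.take (p + ℓ - i)) ↔
      ((bar A B C).drop (i - p) = (bar A B C').take (p + ℓ - i)) := by
  set k := p + ℓ - i with hk
  have hik : i - p = ℓ - k := by omega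
  have hk1 : 1 ≤ k := by omega
  have hk2 : k ≤ ℓ - 1 := by omega
  have mAA : ∀ m, m ∈ corSet A A ↔ (1 ≤ m ∧ m ≤ ℓ - 1 ∧ A.drop (ℓ - m) = A.take m) := by
    intro m
    rw [corSet, Finset.mem_filter, Finset.mem_Icc, hA]
    tauto
  have mBB : ∀ m, m ∈ corSet B B ↔ (1 ≤ m ∧ m ≤ ℓ - 1 ∧ B.drop (ℓ - m) = B.take m) := by
    intro m
    rw [corSet, Finset.mem_filter, Finset.mem_Icc, hB]
    tauto
  have hABiff : (A.drop (ℓ - k) = A.take k) ↔ (B.drop (ℓ - k) = B.take k) := by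
    constructor
    · intro h
      exact ((mBB k).1 (hcor ▸ (mAA k).2 ⟨hk1, hk2, h⟩)).2.2
    · intro h
      exact ((mAA k).1 (hcor.symm ▸ (mBB k).2 ⟨hk1, hk2, h⟩)).2.2
  rcases hC with rfl | rfl <;> rcases hC' with rfl | rfl
  · rw [bar_A, hik]
    exact hABiff
  · rw [bar_A, bar_B]
  · rw [bar_A, bar_B]
  · rw [bar_B, hik]
    exact hABiff.symm

lemma TF_top (ℓ : ℕ) (A B C : List Bool) (hl : 1 ≤ ℓ) (hC : C = A ∨ C = B)
    (hCl : C.length = ℓ) (hAl : A.length = ℓ) (hBl : B.length = ℓ) (i : ℕ) :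
    (TF ℓ A B C i).filter (fun pc => ¬ pc.1 < i) = {(i, C)} := by
  ext ⟨p, C'⟩
  rw [Finset.mem_filter, TF, Finset.mem_filter, Finset.mem_product, Finset.mem_range,
    Finset.mem_singleton]
  simp only [Finset.mem_insert, Finset.mem_singleton, Prod.mk.injEq]
  constructor
  · rintro ⟨⟨⟨h1, h2⟩, h3, h4⟩, h5⟩
    simp only [not_lt] at h5
    have hp : p = i := by omega
    subst hp
    refine ⟨rfl, ?_⟩
    rw [Nat.sub_self, List.drop_zero] at h4
    rw [h4, show p + ℓ - p = ℓ by omega, ← hCl, List.take_length]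
  · rintro ⟨rfl, rfl⟩
    refine ⟨⟨⟨by omega, hC⟩, by omega, ?_⟩, by omega⟩
    rw [Nat.sub_self, List.drop_zero, show p + ℓ - p = ℓ by omega, ← hCl, List.take_length]
  -- note: after rintro rfl for p = i the variable is named p

lemma TF'_top (ℓ : ℕ) (A B W : List Bool) (hl : 1 ≤ ℓ) (hW : W = A ∨ W = B)
    (hWl : W.length = ℓ) (hAl : A.length = ℓ) (hBl : B.length = ℓ) (i : ℕ) :
    (TF' ℓ A B W i).filter (fun pc => ¬ pc.1 < i) = {(i, W)} := by
  ext ⟨p, C'⟩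
  rw [Finset.mem_filter, TF', Finset.mem_filter, Finset.mem_product, Finset.mem_range,
    Finset.mem_singleton]
  simp only [Finset.mem_insert, Finset.mem_singleton, Prod.mk.injEq]
  constructor
  · rintro ⟨⟨⟨h1, h2⟩, h3, h4⟩, h5⟩
    simp only [not_lt] at h5
    have hp : p = i := by omega
    subst hp
    have hC'l : C'.length = ℓ := by rcases h2 with rfl | rfl <;> assumption
    refine ⟨rfl, ?_⟩
    rw [Nat.sub_self, List.drop_zero] at h4
    have he : C'.take (p + ℓ - p) = C' := by
      rw [show p + ℓ - p = ℓ by omega, ← hC'l, List.take_length]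
    rw [he] at h4
    exact h4.symm
  · rintro ⟨rfl, rfl⟩
    refine ⟨⟨⟨by omega, hW⟩, by omega, ?_⟩, by omega⟩
    rw [Nat.sub_self, List.drop_zero, show p + ℓ - p = ℓ by omega, ← hWl, List.take_length]

lemma mainInd (ℓ : ℕ) (A B : List Bool) (hl : 1 ≤ ℓ) (hA : A.length = ℓ) (hB : B.length = ℓ)
    (hcor : corSet A A = corSet B B) :
    ∀ i, fCnt A B A i = gCnt A B B i ∧ fCnt A B B i = gCnt A B A i := by
  intro i
  induction i using Nat.strong_induction_on with
  | _ i IH =>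
    have step : ∀ C, (C = A ∨ C = B) → fCnt A B C i = gCnt A B (bar A B C) i := by
      intro C hC
      have hCl : C.length = ℓ := by rcases hC with rfl | rfl <;> assumption
      have hbar : bar A B C = A ∨ bar A B C = B := bar_mem A B C hC
      have hbarl : (bar A B C).length = ℓ := by rcases hbar with h | h <;> rw [h] <;> assumption
      have e1 := lemL ℓ A B C hl hA hB hC i
      have e2 := lemR ℓ A B (bar A B C) hl hA hB hbar i
      rw [← Finset.sum_filter_add_sum_filter_not (TF ℓ A B C i) (fun pc => pc.1 < i),
        TF_top ℓ A B C hl hC hCl hA hB i, Finset.sum_singleton] at e1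
      rw [← Finset.sum_filter_add_sum_filter_not (TF' ℓ A B (bar A B C) i) (fun pc => pc.1 < i),
        TF'_top ℓ A B (bar A B C) hl hbar hbarl hA hB i, Finset.sum_singleton] at e2
      replace e1 : aCnt A B i =
          (∑ pc ∈ (TF ℓ A B C i).filter (fun pc => pc.1 < i), fCnt A B pc.2 pc.1)
            + fCnt A B C i := e1
      replace e2 : aCnt A B i =
          (∑ pc ∈ (TF' ℓ A B (bar A B C) i).filter (fun pc => pc.1 < i), gCnt A B pc.2 pc.1)
            + gCnt A B (bar A B C) i := e2
      have hsum : ∑ pc ∈ (TF ℓ A B C i).filter (fun pc => pc.1 < i), fCnt A B pc.2 pc.1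
          = ∑ pc ∈ (TF' ℓ A B (bar A B C) i).filter (fun pc => pc.1 < i),
              gCnt A B pc.2 pc.1 := by
        refine Finset.sum_nbij' (i := fun pc => (pc.1, bar A B pc.2))
          (j := fun pc => (pc.1, bar A B pc.2)) ?_ ?_ ?_ ?_ ?_
        · rintro ⟨p, C'⟩ hpc
          rw [Finset.mem_filter, TF, Finset.mem_filter, Finset.mem_product,
            Finset.mem_range] at hpc
          obtain ⟨⟨⟨h1, h2⟩, h3, h4⟩, h5⟩ := hpc
          simp only [Finset.mem_insert, Finset.mem_singleton] at h2
          simp only at h3 h4 h5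
          rw [Finset.mem_filter, TF', Finset.mem_filter, Finset.mem_product, Finset.mem_range]
          refine ⟨⟨⟨h1, ?_⟩, h3, ?_⟩, h5⟩
          · simp only [Finset.mem_insert, Finset.mem_singleton]
            exact bar_mem A B C' h2
          · exact (cond_swap ℓ A B hA hB hcor C C' hC h2 p i h5 h3).1 h4
        · rintro ⟨p, C'⟩ hpc
          rw [Finset.mem_filter, TF', Finset.mem_filter, Finset.mem_product,
            Finset.mem_range] at hpc
          obtain ⟨⟨⟨h1, h2⟩, h3, h4⟩, h5⟩ := hpc
          simp only [Finset.mem_insert, Finset.mem_singleton] at h2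
          simp only at h3 h4 h5
          rw [Finset.mem_filter, TF, Finset.mem_filter, Finset.mem_product, Finset.mem_range]
          refine ⟨⟨⟨h1, ?_⟩, h3, ?_⟩, h5⟩
          · simp only [Finset.mem_insert, Finset.mem_singleton]
            exact bar_mem A B C' h2
          · refine (cond_swap ℓ A B hA hB hcor C (bar A B C') hC
              (bar_mem A B C' h2) p i h5 h3).2 ?_
            rw [bar_bar A B C' h2]
            exact h4
        · rintro ⟨p, C'⟩ hpc
          rw [Finset.mem_filter, TF, Finset.mem_filter, Finset.mem_product,
            Finset.mem_range] at hpc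
          obtain ⟨⟨⟨h1, h2⟩, h3, h4⟩, h5⟩ := hpc
          simp only [Finset.mem_insert, Finset.mem_singleton] at h2
          show (p, bar A B (bar A B C')) = (p, C')
          rw [bar_bar A B C' h2]
        · rintro ⟨p, C'⟩ hpc
          rw [Finset.mem_filter, TF', Finset.mem_filter, Finset.mem_product,
            Finset.mem_range] at hpc
          obtain ⟨⟨⟨h1, h2⟩, h3, h4⟩, h5⟩ := hpc
          simp only [Finset.mem_insert, Finset.mem_singleton] at h2
          show (p, bar A B (bar A B C')) = (p, C')
          rw [bar_bar A B C' h2]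
        · rintro ⟨p, C'⟩ hpc
          rw [Finset.mem_filter, TF, Finset.mem_filter, Finset.mem_product,
            Finset.mem_range] at hpc
          obtain ⟨⟨⟨h1, h2⟩, h3, h4⟩, h5⟩ := hpc
          simp only [Finset.mem_insert, Finset.mem_singleton] at h2
          simp only at h5 ⊢
          rcases h2 with rfl | rfl
          · rw [bar_A]
            exact (IH p h5).1
          · rw [bar_B]
            exact (IH p h5).2
      omega
    refine ⟨?_, ?_⟩
    · have := step A (Or.inl rfl)
      rwa [bar_A] at this
    · have := step B (Or.inr rfl)
      rwa [bar_B] at this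

end SPC2

namespace SPC2
open Finset List SPC

lemma countOcc_nil (A : List Bool) (hl : 1 ≤ A.length) : countOcc A [] = 0 := by
  rw [countOcc_eq_zero_iff]
  rintro q ⟨h1, -⟩
  rw [List.length_nil] at h1
  omega

lemma countOcc_nil_left (X : List Bool) : countOcc ([] : List Bool) X = X.length + 1 := by
  rw [countOcc_eq, Finset.filter_true_of_mem, Finset.card_range]
  intro q hq
  rw [Finset.mem_range] at hq
  exact ⟨by simp; omega, by simp⟩

lemma overlap_single (A B C : List Bool) (hC : C = A ∨ C = B) : isOverlap A B C := by
  refine ⟨[C], [], by simp, by simp, ?_, ?_, rfl⟩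
  · intro C' hC'
    simp at hC'
    subst hC'
    exact hC
  · intro j hj
    simp at hj

lemma gapsz (ℓ : ℕ) (A B C X : List Bool) (hl : 1 ≤ ℓ) (hA : A.length = ℓ)
    (hB : B.length = ℓ) (hCl : C.length = ℓ)
    (hoa : countOcc A (X ++ C) = countOcc A C) (hob : countOcc B (X ++ C) = countOcc B C) :
    countOcc A X = 0 ∧ countOcc B X = 0 := by
  have h1 := (onlyEnd_iff_one A C X X.length (by omega) (by omega) rfl).1 hoa
  have h2 := (onlyEnd_iff_one B C X X.length (by omega) (by omega) rfl).1 hob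
  constructor
  · rw [countOcc_eq_zero_iff]
    intro q hq
    have hocc := (occAt_append_left_iff A X C q hq.1).2 hq
    have h3 := h1 q hocc
    have h4 := hq.1
    rw [hA] at h4
    omega
  · rw [countOcc_eq_zero_iff]
    intro q hq
    have hocc := (occAt_append_left_iff B X C q hq.1).2 hq
    have h3 := h2 q hocc
    have h4 := hq.1
    rw [hB] at h4
    omega

lemma gapsz' (ℓ : ℕ) (A B C X : List Bool) (hl : 1 ≤ ℓ) (hA : A.length = ℓ)
    (hB : B.length = ℓ) (hCl : C.length = ℓ)
    (hoa : countOcc A (C ++ X) = countOcc A C) (hob : countOcc B (C ++ X) = countOcc B C) :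
    countOcc A X = 0 ∧ countOcc B X = 0 := by
  have h1 : countOcc A.reverse (X.reverse ++ C.reverse) = countOcc A.reverse C.reverse := by
    rw [← List.reverse_append, countOcc_reverse, countOcc_reverse]
    exact hoa
  have h2 : countOcc B.reverse (X.reverse ++ C.reverse) = countOcc B.reverse C.reverse := by
    rw [← List.reverse_append, countOcc_reverse, countOcc_reverse]
    exact hob
  have h3 := gapsz ℓ A.reverse B.reverse C.reverse X.reverse (by omega) (by simp [hA])
    (by simp [hB]) (by simp [hCl]) h1 h2
  rw [countOcc_reverse, countOcc_reverse] at h3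
  exact h3

lemma patL (ℓ : ℕ) (A B : List Bool) (hl : 1 ≤ ℓ) (hA : A.length = ℓ) (hB : B.length = ℓ)
    (i : ℕ) : patCount A B [A] [i, 0] = fCnt A B A i := by
  classical
  rw [patCount]
  have hset : {Y : List Bool | ∃ Xs, isDecomp A B Y Xs [A] ∧ Xs.map List.length = [i, 0]} =
      ↑(((allBL i).filter (fun X => countOcc A (X ++ A) = countOcc A A ∧
        countOcc B (X ++ A) = countOcc B A)).image (fun X => X ++ A)) := by
    ext Y
    simp only [Set.mem_setOf_eq, Finset.coe_image, Set.mem_image, Finset.mem_coe,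
      Finset.mem_filter, mem_allBL]
    constructor
    · rintro ⟨Xs, ⟨hlen, hY, hov, hgap, hca, hcb⟩, hmap⟩
      obtain ⟨X, Z, rfl⟩ : ∃ X Z, Xs = [X, Z] := by
        cases Xs with
        | nil => simp at hmap
        | cons a t =>
          cases t with
          | nil => simp at hmap
          | cons b t2 =>
            cases t2 with
            | nil => exact ⟨a, b, rfl⟩
            | cons c t3 => simp at hmap
      simp only [List.map_cons, List.map_nil, List.cons.injEq, and_true] at hmap
      obtain ⟨hXl, hZl⟩ := hmap
      have hZnil : Z = [] := List.length_eq_zero_iff.1 hZl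
      subst hZnil
      have hYe : Y = X ++ A := by
        rw [hY]
        simp [_root_.interleave]
      rw [hYe] at hca hcb
      refine ⟨X, ⟨hXl, by simpa using hca, by simpa using hcb⟩, hYe.symm⟩
    · rintro ⟨X, ⟨hXl, hoa, hob⟩, rfl⟩
      refine ⟨[X, []], ⟨by simp, by simp [_root_.interleave], ?_, ?_,
        by simpa using hoa, by simpa using hob⟩, by simp [hXl]⟩
      · intro E hE
        simp at hE
        exact overlap_single A B E (Or.inl hE)
      · intro X' hX'
        simp at hX'
        rcases hX' with rfl | rfl
        · exact gapsz ℓ A B A X' hl hA hB hA hoa hob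
        · exact ⟨countOcc_nil A (by omega), countOcc_nil B (by omega)⟩
  rw [hset, Set.ncard_coe_finset,
    Finset.card_image_of_injective _ (List.append_left_injective A), fCnt]

lemma patR (ℓ : ℕ) (A B : List Bool) (hl : 1 ≤ ℓ) (hA : A.length = ℓ) (hB : B.length = ℓ)
    (i : ℕ) : patCount A B [B] [0, i] = gCnt A B B i := by
  classical
  rw [patCount]
  have hset : {Y : List Bool | ∃ Xs, isDecomp A B Y Xs [B] ∧ Xs.map List.length = [0, i]} =
      ↑(((allBL i).filter (fun X => countOcc A (B ++ X) = countOcc A B ∧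
        countOcc B (B ++ X) = countOcc B B)).image (fun X => B ++ X)) := by
    ext Y
    simp only [Set.mem_setOf_eq, Finset.coe_image, Set.mem_image, Finset.mem_coe,
      Finset.mem_filter, mem_allBL]
    constructor
    · rintro ⟨Xs, ⟨hlen, hY, hov, hgap, hca, hcb⟩, hmap⟩
      obtain ⟨Z, X, rfl⟩ : ∃ Z X, Xs = [Z, X] := by
        cases Xs with
        | nil => simp at hmap
        | cons a t =>
          cases t with
          | nil => simp at hmap
          | cons b t2 =>
            cases t2 with
            | nil => exact ⟨a, b, rfl⟩
            | cons c t3 => simp at hmap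
      simp only [List.map_cons, List.map_nil, List.cons.injEq, and_true] at hmap
      obtain ⟨hZl, hXl⟩ := hmap
      have hZnil : Z = [] := List.length_eq_zero_iff.1 hZl
      subst hZnil
      have hYe : Y = B ++ X := by
        rw [hY]
        simp [_root_.interleave]
      rw [hYe] at hca hcb
      refine ⟨X, ⟨hXl, by simpa using hca, by simpa using hcb⟩, hYe.symm⟩
    · rintro ⟨X, ⟨hXl, hoa, hob⟩, rfl⟩
      refine ⟨[[], X], ⟨by simp, by simp [_root_.interleave], ?_, ?_,
        by simpa using hoa, by simpa using hob⟩, by simp [hXl]⟩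
      · intro E hE
        simp at hE
        exact overlap_single A B E (Or.inr hE)
      · intro X' hX'
        simp at hX'
        rcases hX' with rfl | rfl
        · exact ⟨countOcc_nil A (by omega), countOcc_nil B (by omega)⟩
        · exact gapsz' ℓ A B B X' hl hA hB hB hoa hob
  rw [hset, Set.ncard_coe_finset,
    Finset.card_image_of_injective _ (List.append_right_injective B), gCnt]

end SPC2


/-- for `A`, `B` of length `ℓ` with `Cor(A,A) = Cor(B,B)` and
every `i ≥ 0`, `L^{(A)}(i,0) = L^{(B)}(0,i)`: the number of words `X·A` of
length `i + ℓ` with pattern exactly `(A)` (gap lengths `(i,0)`) equals the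
number of words `B·X` with pattern exactly `(B)` (gap lengths `(0,i)`). -/
theorem single_pattern_count (ℓ : ℕ) (A B : List Bool)
    (hA : A.length = ℓ) (hB : B.length = ℓ) (hcor : corSet A A = corSet B B) (i : ℕ) :
    patCount A B [A] [i, 0] = patCount A B [B] [0, i] := by
  rcases Nat.eq_zero_or_pos ℓ with hz | hl
  · have hAnil : A = [] := List.length_eq_zero_iff.1 (by omega)
    have hempty : ∀ (E : List Bool) (I : List ℕ),
        {Y : List Bool | ∃ Xs, isDecomp A B Y Xs [E] ∧ Xs.map List.length = I} = ∅ := by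
      intro E I
      ext Y
      simp only [Set.mem_setOf_eq, Set.mem_empty_iff_false, iff_false]
      rintro ⟨Xs, ⟨hlen, -, -, hgap, -, -⟩, -⟩
      cases Xs with
      | nil => simp at hlen
      | cons x0 t =>
        have h := (hgap x0 (by simp)).1
        rw [hAnil, SPC2.countOcc_nil_left] at h
        omega
    rw [patCount, patCount, hempty A [i, 0], hempty B [0, i]]
  · rw [SPC2.patL ℓ A B hl hA hB i, SPC2.patR ℓ A B hl hA hB i]
    exact (SPC2.mainInd ℓ A B hl hA hB hcor i).1
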